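/- If a closed disk of radius r in the Euclidean plane is covered by finitely many parallel strips (planks) of widths w₁, …, w_l, then w₁ + … + w_l ≥ 2r. -/

import Mathlib

/-!
Weight the plane by the density `1 / √(r² - ‖x - c‖²)` on the open disk: up to the factor `r`,
this is the area measure of the hemisphere over the disk, projected onto the plane. By Archimedes'
hat-box theorem its image under the projection to any line through `c` is `π` times Lebesgue
measure on the diameter. Hence a plank of width `w` carries mass at most `π w`, while the disk
carries `2 π r`, and planks covering the disk have total width at least `2 r`.
-/

/-- A plank (strip) of width `w` in direction of the unit vector `u`. -/
def plank (u : EuclideanSpace ℝ (Fin 2)) (a w : ℝ) : Set (EuclideanSpace ℝ (Fin 2)) :=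
  {x | a ≤ (inner ℝ x u : ℝ) ∧ (inner ℝ x u : ℝ) ≤ a + w}

open MeasureTheory Real Set Metric

theorem ofReal_inv_sqrt_of_nonpos {t : ℝ} (ht : t ≤ 0) : ENNReal.ofReal (√t)⁻¹ = 0 := by
  rw [sqrt_eq_zero'.2 ht, inv_zero, ENNReal.ofReal_zero]

theorem sq_le_sq_of_notMem_Ioo {s y : ℝ} (hs : 0 ≤ s) (hy : y ∉ Ioo (-s) s) : s ^ 2 ≤ y ^ 2 :=
  sq_le_sq.2 ((abs_of_nonneg hs).trans_le (not_lt.1 fun h => hy (abs_lt.1 h)))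

theorem lintegral_Ioo_inv_sqrt_sq_sub_sq {s : ℝ} (hs : 0 < s) :
    ∫⁻ y in Ioo (-s) s, ENNReal.ofReal (√(s ^ 2 - y ^ 2))⁻¹ = ENNReal.ofReal π := by
  set I := Ioo (-(π / 2)) (π / 2)
  have himage : (fun t => s * sin t) '' I = Ioo (-s) s := by
    rw [← image_image (s * ·) sin I]
    have : sin '' I = Ioo (-1) 1 := sinPartialHomeomorph.image_source_eq_target
    rw [this, image_mul_left_Ioo hs, mul_neg_one, mul_one]
  have hinj : InjOn (fun t => s * sin t) I :=
    ((mul_right_injective₀ hs.ne').comp_injOn (injOn_sin.mono Ioo_subset_Icc_self))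
  have hderiv : ∀ t ∈ I, HasDerivWithinAt (fun t => s * sin t) (s * cos t) I t :=
    fun t _ => ((hasDerivAt_sin t).const_mul s).hasDerivWithinAt
  rw [← himage, lintegral_image_eq_lintegral_abs_deriv_mul measurableSet_Ioo hderiv hinj]
  have hone : ∀ t ∈ I,
      ENNReal.ofReal |s * cos t| * ENNReal.ofReal (√(s ^ 2 - (s * sin t) ^ 2))⁻¹ = 1 := by
    intro t ht
    have hcos : 0 < s * cos t := mul_pos hs (cos_pos_of_mem_Ioo ht)
    rw [show s ^ 2 - (s * sin t) ^ 2 = (s * cos t) ^ 2 by nlinarith [sin_sq_add_cos_sq t],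
      sqrt_sq hcos.le, abs_of_pos hcos, ← ENNReal.ofReal_mul hcos.le,
      mul_inv_cancel₀ hcos.ne', ENNReal.ofReal_one]
  rw [setLIntegral_congr_fun measurableSet_Ioo hone, setLIntegral_one, volume_Ioo]
  ring_nf

theorem lintegral_inv_sqrt_sq_sub_sq_add_sq {r : ℝ} (hr : 0 < r) (x : ℝ) :
    ∫⁻ y, ENNReal.ofReal (√(r ^ 2 - (x ^ 2 + y ^ 2)))⁻¹ =
      (Ioo (-r) r).indicator (fun _ => ENNReal.ofReal π) x := by
  by_cases hx : x ∈ Ioo (-r) r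
  · have hx2 : 0 < r ^ 2 - x ^ 2 := by nlinarith [hx.1, hx.2]
    obtain ⟨s, hs, hs2⟩ : ∃ s, 0 < s ∧ s ^ 2 = r ^ 2 - x ^ 2 :=
      ⟨√(r ^ 2 - x ^ 2), sqrt_pos.2 hx2, sq_sqrt hx2.le⟩
    have hslice : ∀ y, r ^ 2 - (x ^ 2 + y ^ 2) = s ^ 2 - y ^ 2 := fun y => by
      rw [hs2]; ring
    have hsupp : (fun y => ENNReal.ofReal (√(s ^ 2 - y ^ 2))⁻¹).support ⊆ Ioo (-s) s :=
      fun y hy => by_contra fun hy' =>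
        hy (ofReal_inv_sqrt_of_nonpos (sub_nonpos.2 (sq_le_sq_of_notMem_Ioo hs.le hy')))
    rw [indicator_of_mem hx, ← lintegral_Ioo_inv_sqrt_sq_sub_sq hs,
      setLIntegral_eq_of_support_subset hsupp]
    simp only [hslice]
  · rw [indicator_of_notMem hx]
    have hnonpos : ∀ y, r ^ 2 - (x ^ 2 + y ^ 2) ≤ 0 := fun y => by
      nlinarith [sq_le_sq_of_notMem_Ioo hr.le hx, sq_nonneg y]
    simp only [ofReal_inv_sqrt_of_nonpos (hnonpos _), lintegral_zero]

theorem map_fst_withDensity_inv_sqrt {r : ℝ} (hr : 0 < r) :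
    (volume.withDensity fun p : ℝ × ℝ => ENNReal.ofReal (√(r ^ 2 - (p.1 ^ 2 + p.2 ^ 2)))⁻¹).map
      Prod.fst = ENNReal.ofReal π • volume.restrict (Ioo (-r) r) := by
  ext A hA
  have hmeas : Measurable fun p : ℝ × ℝ => ENNReal.ofReal (√(r ^ 2 - (p.1 ^ 2 + p.2 ^ 2)))⁻¹ := by
    fun_prop
  rw [Measure.map_apply measurable_fst hA, withDensity_apply _ (measurable_fst hA),
    ← prod_univ, Measure.volume_eq_prod, ← Measure.prod_restrict, Measure.restrict_univ,
    lintegral_prod _ hmeas.aemeasurable]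
  simp only [lintegral_inv_sqrt_sq_sub_sq_add_sq hr]
  rw [lintegral_indicator_const measurableSet_Ioo, Measure.smul_apply,
    Measure.restrict_apply hA, Measure.restrict_apply measurableSet_Ioo, inter_comm, smul_eq_mul]

theorem MeasureTheory.MeasurePreserving.map_withDensity_comp {α β : Type*} [MeasurableSpace α]
    [MeasurableSpace β] {μ : Measure α} {ν : Measure β} {f : α → β}
    (hf : MeasurePreserving f μ ν) {g : β → ENNReal} (hg : Measurable g) :
    (μ.withDensity (g ∘ f)).map f = ν.withDensity g := by
  ext s hs
  rw [Measure.map_apply hf.measurable hs, withDensity_apply _ (hf.measurable hs),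
    withDensity_apply _ hs]
  exact hf.setLIntegral_comp_preimage hs hg

variable {E : Type*} [NormedAddCommGroup E] [InnerProductSpace ℝ E] [FiniteDimensional ℝ E]
  [MeasurableSpace E] [BorelSpace E]

theorem exists_measurePreserving_inner_fst (hE : Module.finrank ℝ E = 2) {u : E} (hu : ‖u‖ = 1) :
    ∃ Φ : E → ℝ × ℝ, MeasurePreserving Φ ∧ (∀ x, (Φ x).1 = inner ℝ x u) ∧
      ∀ x, ‖x‖ ^ 2 = (Φ x).1 ^ 2 + (Φ x).2 ^ 2 := by
  have horth : Orthonormal ℝ (({0} : Set (Fin 2)).domRestrict fun _ => u) :=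
    ⟨fun _ => hu, fun i j hij => (hij (Subtype.ext (i.2.trans j.2.symm))).elim⟩
  obtain ⟨b, hb⟩ := horth.exists_orthonormalBasis_extension_of_card_eq (by simpa using hE)
  refine ⟨MeasurableEquiv.piFinTwo (fun _ => ℝ) ∘ (MeasurableEquiv.toLp 2 (Fin 2 → ℝ)).symm ∘
    b.measurableEquiv, ?_, fun x => ?_, fun x => ?_⟩
  · exact (volume_preserving_piFinTwo _).comp
      ((EuclideanSpace.volume_preserving_symm_measurableEquiv_toLp _).comp
        b.measurePreserving_measurableEquiv)
  · change b.repr x 0 = _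
    rw [b.repr_apply_apply, hb 0 rfl, real_inner_comm]
  · change ‖x‖ ^ 2 = b.repr x 0 ^ 2 + b.repr x 1 ^ 2
    rw [← b.repr.norm_map, EuclideanSpace.real_norm_sq_eq, Fin.sum_univ_two]

/-- `√` of a negative number and `0⁻¹` are both `0`, so the density vanishes off the open disk. -/
noncomputable def archimedesMeasure (c : E) (r : ℝ) : Measure E :=
  volume.withDensity fun x => ENNReal.ofReal (√(r ^ 2 - ‖x - c‖ ^ 2))⁻¹

theorem map_inner_sub_archimedesMeasure (hE : Module.finrank ℝ E = 2) (c : E) {r : ℝ}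
    (hr : 0 < r) {u : E} (hu : ‖u‖ = 1) :
    (archimedesMeasure c r).map (fun x => inner ℝ (x - c) u) =
      ENNReal.ofReal π • volume.restrict (Ioo (-r) r) := by
  obtain ⟨Φ, hΦ, hΦ_fst, hΦ_norm⟩ := exists_measurePreserving_inner_fst hE hu
  have hΨ : MeasurePreserving (Φ ∘ (· - c)) := hΦ.comp (measurePreserving_sub_right volume c)
  have hdensity : (fun x => ENNReal.ofReal (√(r ^ 2 - ‖x - c‖ ^ 2))⁻¹) =
      (fun p : ℝ × ℝ => ENNReal.ofReal (√(r ^ 2 - (p.1 ^ 2 + p.2 ^ 2)))⁻¹) ∘ Φ ∘ (· - c) :=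
    funext fun x => by simp only [Function.comp_apply, hΦ_norm]
  have hproj : (fun x => inner ℝ (x - c) u) = Prod.fst ∘ Φ ∘ (· - c) :=
    funext fun x => (hΦ_fst (x - c)).symm
  rw [archimedesMeasure, hdensity, hproj, ← Measure.map_map measurable_fst hΨ.measurable,
    hΨ.map_withDensity_comp (by fun_prop), map_fst_withDensity_inv_sqrt hr]

theorem archimedesMeasure_univ (hE : Module.finrank ℝ E = 2) (c : E) {r : ℝ} (hr : 0 < r) :
    archimedesMeasure c r univ = ENNReal.ofReal (π * (2 * r)) := by
  have : Nontrivial E := Module.nontrivial_of_finrank_eq_succ hE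
  obtain ⟨u, hu⟩ := exists_norm_eq E zero_le_one
  calc archimedesMeasure c r univ
      = (archimedesMeasure c r).map (fun x => inner ℝ (x - c) u) univ :=
        (Measure.map_apply (by fun_prop) MeasurableSet.univ).symm
    _ = _ := by
      rw [map_inner_sub_archimedesMeasure hE c hr hu, Measure.smul_apply,
        Measure.restrict_apply MeasurableSet.univ, univ_inter, volume_Ioo, smul_eq_mul,
        ← ENNReal.ofReal_mul pi_pos.le]
      ring_nf

theorem archimedesMeasure_compl_ball (c : E) {r : ℝ} (hr : 0 ≤ r) :
    archimedesMeasure c r (ball c r)ᶜ = 0 := by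
  rw [archimedesMeasure, withDensity_apply _ isOpen_ball.measurableSet.compl]
  refine setLIntegral_eq_zero isOpen_ball.measurableSet.compl fun x hx => ?_
  rw [mem_compl_iff, mem_ball_iff_norm, not_lt] at hx
  exact ofReal_inv_sqrt_of_nonpos (sub_nonpos.2 (pow_le_pow_left₀ hr hx 2))

theorem archimedesMeasure_plank_le (c : EuclideanSpace ℝ (Fin 2)) {r : ℝ} (hr : 0 < r)
    {u : EuclideanSpace ℝ (Fin 2)} (hu : ‖u‖ = 1) (a w : ℝ) :
    archimedesMeasure c r (plank u a w) ≤ ENNReal.ofReal (π * w) := by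
  set k := inner ℝ c u
  have hplank : plank u a w = (fun x => inner ℝ (x - c) u) ⁻¹' Icc (a - k) (a + w - k) := by
    ext x
    simp only [plank, mem_ofPred_eq, mem_preimage, mem_Icc, inner_sub_left]
    constructor <;> rintro ⟨h1, h2⟩ <;> constructor <;> linarith
  rw [hplank, ← Measure.map_apply (by fun_prop) measurableSet_Icc,
    map_inner_sub_archimedesMeasure finrank_euclideanSpace_fin c hr hu, Measure.smul_apply,
    Measure.restrict_apply measurableSet_Icc, smul_eq_mul, ENNReal.ofReal_mul pi_pos.le]
  gcongr
  calc volume (Icc (a - k) (a + w - k) ∩ Ioo (-r) r) ≤ volume (Icc (a - k) (a + w - k)) :=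
        measure_mono inter_subset_left
    _ = ENNReal.ofReal w := by rw [volume_Icc]; ring_nf

/-- Moese's theorem (Tarski's plank problem for the disk): if a closed disk of
radius `r` is covered by finitely many planks, their total width is at least `2r`. -/
theorem tarski_plank_disk (c : EuclideanSpace ℝ (Fin 2)) (r : ℝ) (hr : 0 < r)
    (l : ℕ) (u : Fin l → EuclideanSpace ℝ (Fin 2)) (a w : Fin l → ℝ)
    (hu : ∀ i, ‖u i‖ = 1) (hw : ∀ i, 0 ≤ w i)
    (hcov : Metric.closedBall c r ⊆ ⋃ i, plank (u i) (a i) (w i)) :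
    2 * r ≤ ∑ i, w i := by
  set μ := archimedesMeasure c r
  have hcover : univ ⊆ (⋃ i, plank (u i) (a i) (w i)) ∪ (ball c r)ᶜ := fun x _ =>
    (em (x ∈ ball c r)).imp (fun hx => hcov (ball_subset_closedBall hx)) id
  have hmass : ENNReal.ofReal (π * (2 * r)) ≤ ENNReal.ofReal (π * ∑ i, w i) :=
    calc ENNReal.ofReal (π * (2 * r)) = μ univ :=
          (archimedesMeasure_univ finrank_euclideanSpace_fin c hr).symm
      _ ≤ μ (⋃ i, plank (u i) (a i) (w i)) + μ (ball c r)ᶜ :=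
          (measure_mono hcover).trans (measure_union_le _ _)
      _ ≤ ∑ i, μ (plank (u i) (a i) (w i)) := by
          rw [archimedesMeasure_compl_ball c hr.le, add_zero]
          exact measure_iUnion_fintype_le _ _
      _ ≤ ∑ i, ENNReal.ofReal (π * w i) :=
          Finset.sum_le_sum fun i _ => archimedesMeasure_plank_le c hr (hu i) _ _
      _ = ENNReal.ofReal (π * ∑ i, w i) := by
          rw [Finset.mul_sum, ENNReal.ofReal_sum_of_nonneg fun i _ => mul_nonneg pi_pos.le (hw i)]
  have hsum : 0 ≤ ∑ i, w i := Finset.sum_nonneg fun i _ => hw i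
  exact le_of_mul_le_mul_left
    ((ENNReal.ofReal_le_ofReal_iff (mul_nonneg pi_pos.le hsum)).1 hmass) pi_pos
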